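/- arXiv:1812.06794 — 4 statements merged into one kernel-verified Lean document; each statement's English description precedes it below -/
import Mathlib

section
/- Let a < b, n ∈ ℕ, and let B0, N0 : [a,b] → ℝ^{n×n} and B1, B2, N1, N2 : [a,b]×[a,b] → ℝ^{n×n} be bounded measurable matrix-valued functions. Define R0(s) = B0(s)N0(s); R1(s,θ) = B0(s)N1(s,θ) + B1(s,θ)N0(θ) + ∫ₐ^θ B1(s,ξ)N2(ξ,θ) dξ + ∫_θ^s B1(s,ξ)N1(ξ,θ) dξ + ∫_s^b B2(s,ξ)N1(ξ,θ) dξ; and R2(s,θ) = B0(s)N2(s,θ) + B2(s,θ)N0(θ) + ∫ₐ^s B1(s,ξ)N2(ξ,θ) dξ + ∫_s^θ B2(s,ξ)N2(ξ,θ) dξ + ∫_θ^b B2(s,ξ)N1(ξ,θ) dξ. Then the composition of the corresponding 3-PI operators satisfies P_{B0,B1,B2} ∘ P_{N0,N1,N2} = P_{R0,R1,R2}; that is, for every x ∈ L²([a,b];ℝⁿ) and almost every s ∈ [a,b], (P_{B0,B1,B2}(P_{N0,N1,N2} x))(s) = (P_{R0,R1,R2} x)(s). -/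
open MeasureTheory Set Matrix ENNReal

noncomputable section

/-- The 3-PI (partial integral) operator with multiplier N0 and kernels N1 (below
the diagonal) and N2 (above the diagonal) on the interval [a,b]. -/
def PIop {n : ℕ} (a b : ℝ)
    (N0 : ℝ → Matrix (Fin n) (Fin n) ℝ) (N1 N2 : ℝ → ℝ → Matrix (Fin n) (Fin n) ℝ)
    (x : ℝ → Fin n → ℝ) : ℝ → Fin n → ℝ := fun s =>
  (N0 s).mulVec (x s) + (∫ θ in a..s, (N1 s θ).mulVec (x θ)) +
    ∫ θ in s..b, (N2 s θ).mulVec (x θ)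

/-!
On `[a,b]` a 3-PI operator is a multiplication operator plus one integral operator, whose
kernel `K_N` is `N1` below the diagonal and `N2` above it. For bounded measurable data and
integrable `x`, Fubini's theorem shows that composing two "multiplier plus kernel" operators
gives another one, with multiplier `B0 N0` and kernel
`B0(s) K_N(s,ξ) + K_B(s,ξ) N0(ξ) + ∫ K_B(s,θ) K_N(θ,ξ) dθ`.
Splitting the last integral at `ξ` and `s`, according to which branch each kernel takes,
yields `R1` for `ξ ≤ s` and `R2` for `s < ξ`.
-/

section MatrixLInfty

variable {α : Type*} [MeasurableSpace α] {μ : Measure α} {l m n : Type*}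

theorem memLp_top_matrix_mul [Fintype m] {A : α → Matrix l m ℝ} {B : α → Matrix m n ℝ}
    (hA : ∀ i j, MemLp (fun t => A t i j) ∞ μ) (hB : ∀ i j, MemLp (fun t => B t i j) ∞ μ)
    (i : l) (j : n) : MemLp (fun t => (A t * B t) i j) ∞ μ := by
  simp only [mul_apply]
  exact memLp_finsetSum _ fun k _ => (hB k j).mul' (hA i k)

theorem MeasureTheory.Integrable.matrix_mulVec [Fintype m] [Fintype n] {A : α → Matrix m n ℝ}
    {v : α → n → ℝ} (hA : ∀ i j, MemLp (fun t => A t i j) ∞ μ) (hv : Integrable v μ) :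
    Integrable (fun t => A t *ᵥ v t) μ :=
  Integrable.of_eval fun i => integrable_finsetSum _ fun j _ =>
    (hv.eval j).mul_of_top_right (hA i j)

theorem mulVec_integral [Fintype m] [Fintype n] (A : Matrix m n ℝ) {f : α → n → ℝ}
    (hf : Integrable f μ) :
    A *ᵥ ∫ t, f t ∂μ = ∫ t, A *ᵥ f t ∂μ :=
  ((mulVecLin A).toContinuousLinearMap.integral_comp_comm hf).symm

theorem integral_mulVec_const [Fintype m] [Fintype n] {A : α → Matrix m n ℝ}
    (hA : ∀ i j, Integrable (fun t => A t i j) μ) (v : n → ℝ) :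
    ∫ t, A t *ᵥ v ∂μ = (of fun i j => ∫ t, A t i j ∂μ) *ᵥ v := by
  have hAv : ∀ i, Integrable (fun t => (A t *ᵥ v) i) μ := fun i =>
    integrable_finsetSum _ fun j _ => (hA i j).mul_const (v j)
  ext i
  rw [eval_integral hAv]
  simp only [mulVec, dotProduct, of_apply]
  rw [integral_finsetSum _ fun j _ => (hA i j).mul_const (v j)]
  simp_rw [integral_mul_const]

end MatrixLInfty

section KernelOp

variable {α : Type*} [MeasurableSpace α] {μ : Measure α} {l m n : Type*}

def kernelOp [Fintype m] [Fintype n] (μ : Measure α) (C0 : α → Matrix m n ℝ)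
    (K : α → α → Matrix m n ℝ) (x : α → n → ℝ) : α → m → ℝ :=
  fun s => C0 s *ᵥ x s + ∫ θ, K s θ *ᵥ x θ ∂μ

def compKernel [Fintype m] (μ : Measure α) (B0 : α → Matrix l m ℝ)
    (KB : α → α → Matrix l m ℝ) (N0 : α → Matrix m n ℝ) (KN : α → α → Matrix m n ℝ) :
    α → α → Matrix l n ℝ := fun s ξ =>
  B0 s * KN s ξ + KB s ξ * N0 ξ + of fun i j => ∫ θ, (KB s θ * KN θ ξ) i j ∂μ

variable [IsFiniteMeasure μ] [Fintype l] [Fintype m] [Fintype n]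
  {B0 : α → Matrix l m ℝ} {KB : α → α → Matrix l m ℝ} {N0 : α → Matrix m n ℝ}
  {KN : α → α → Matrix m n ℝ} {x : α → n → ℝ} {s : α}

omit [IsFiniteMeasure μ] in
theorem kernelOp_apply_congr {KN' : α → α → Matrix m n ℝ} {x' : α → n → ℝ}
    (hs : x s = x' s) (h : ∀ᵐ θ ∂μ, KN s θ *ᵥ x θ = KN' s θ *ᵥ x' θ) :
    kernelOp μ N0 KN x s = kernelOp μ N0 KN' x' s := by
  simp only [kernelOp, hs, integral_congr_ae h]

theorem integrable_uncurry_mulVec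
    (hKN : ∀ i j, MemLp (fun p : α × α => KN p.1 p.2 i j) ∞ (μ.prod μ))
    (hx : Integrable x μ) :
    Integrable (fun p : α × α => KN p.1 p.2 *ᵥ x p.2) (μ.prod μ) :=
  (hx.comp_snd μ).matrix_mulVec hKN

theorem integrable_kernelOp (hN0 : ∀ i j, MemLp (fun t => N0 t i j) ∞ μ)
    (hKN : ∀ i j, MemLp (fun p : α × α => KN p.1 p.2 i j) ∞ (μ.prod μ))
    (hx : Integrable x μ) :
    Integrable (kernelOp μ N0 KN x) μ :=
  (hx.matrix_mulVec hN0).add (integrable_uncurry_mulVec hKN hx).integral_prod_left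

omit [IsFiniteMeasure μ] in
theorem mulVec_kernelOp (B : Matrix l m ℝ) (r : α)
    (hr : Integrable (fun ξ => KN r ξ *ᵥ x ξ) μ) :
    B *ᵥ kernelOp μ N0 KN x r = (B * N0 r) *ᵥ x r + ∫ ξ, (B * KN r ξ) *ᵥ x ξ ∂μ := by
  rw [kernelOp, mulVec_add, mulVec_mulVec, mulVec_integral B hr]
  simp_rw [mulVec_mulVec]

section Composition

variable (hKBs : ∀ i j, MemLp (fun θ => KB s θ i j) ∞ μ)
  (hKN : ∀ i j, MemLp (fun p : α × α => KN p.1 p.2 i j) ∞ (μ.prod μ))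
include hKBs hKN

omit [Fintype l] [Fintype n] in
theorem memLp_top_uncurry_mul :
    ∀ i j, MemLp (fun p : α × α => (KB s p.1 * KN p.1 p.2) i j) ∞ (μ.prod μ) :=
  memLp_top_matrix_mul (fun i k => (hKBs i k).comp_fst μ) hKN

theorem ae_integral_mul_mulVec_eq :
    ∀ᵐ ξ ∂μ, ∫ θ, (KB s θ * KN θ ξ) *ᵥ x ξ ∂μ =
      (of fun i j => ∫ θ, (KB s θ * KN θ ξ) i j ∂μ) *ᵥ x ξ := by
  have hsec : ∀ᵐ ξ ∂μ, ∀ i j, Integrable (fun θ => (KB s θ * KN θ ξ) i j) μ := by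
    simp only [ae_all_iff]
    exact fun i j =>
      ((memLp_top_uncurry_mul hKBs hKN i j).integrable le_top).prod_left_ae
  filter_upwards [hsec] with ξ hξ using integral_mulVec_const hξ (x ξ)

theorem integrable_integral_mul_mulVec (hx : Integrable x μ) :
    Integrable (fun ξ => (of fun i j => ∫ θ, (KB s θ * KN θ ξ) i j ∂μ) *ᵥ x ξ) μ :=
  (integrable_uncurry_mulVec (KN := fun θ ξ => KB s θ * KN θ ξ)
    (memLp_top_uncurry_mul hKBs hKN) hx).integral_prod_right.congr
    (ae_integral_mul_mulVec_eq hKBs hKN)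

theorem integral_mulVec_kernelOp (hN0 : ∀ i j, MemLp (fun t => N0 t i j) ∞ μ)
    (hx : Integrable x μ) :
    ∫ θ, KB s θ *ᵥ kernelOp μ N0 KN x θ ∂μ =
      ∫ θ, (KB s θ * N0 θ) *ᵥ x θ ∂μ +
        ∫ ξ, (of fun i j => ∫ θ, (KB s θ * KN θ ξ) i j ∂μ) *ᵥ x ξ ∂μ := by
  have hprod := integrable_uncurry_mulVec (KN := fun θ ξ => KB s θ * KN θ ξ)
    (memLp_top_uncurry_mul hKBs hKN) hx
  have hpush : ∀ᵐ θ ∂μ, KB s θ *ᵥ kernelOp μ N0 KN x θ =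
      (KB s θ * N0 θ) *ᵥ x θ + ∫ ξ, (KB s θ * KN θ ξ) *ᵥ x ξ ∂μ := by
    filter_upwards [(integrable_uncurry_mulVec hKN hx).prod_right_ae] with θ hθ
    exact mulVec_kernelOp _ θ hθ
  rw [integral_congr_ae hpush,
    integral_add (hx.matrix_mulVec (memLp_top_matrix_mul hKBs hN0)) hprod.integral_prod_left,
    integral_integral_swap hprod, integral_congr_ae (ae_integral_mul_mulVec_eq hKBs hKN)]

variable (hN0 : ∀ i j, MemLp (fun t => N0 t i j) ∞ μ)
  (hKNs : ∀ i j, MemLp (fun ξ => KN s ξ i j) ∞ μ) (hx : Integrable x μ)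
include hN0 hKNs hx

theorem integrable_compKernel_mulVec :
    Integrable (fun ξ => compKernel μ B0 KB N0 KN s ξ *ᵥ x ξ) μ := by
  simp only [compKernel, add_mulVec]
  have hB0s : ∀ i k, MemLp (fun _ : α => B0 s i k) ∞ μ := fun i k => memLp_top_const _
  exact ((hx.matrix_mulVec (memLp_top_matrix_mul hB0s hKNs)).add
    (hx.matrix_mulVec (memLp_top_matrix_mul hKBs hN0))).add
    (integrable_integral_mul_mulVec hKBs hKN hx)

theorem kernelOp_comp_apply :
    kernelOp μ B0 KB (kernelOp μ N0 KN x) s =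
      kernelOp μ (fun r => B0 r * N0 r) (compKernel μ B0 KB N0 KN) x s := by
  have hB0s : ∀ i k, MemLp (fun _ : α => B0 s i k) ∞ μ := fun i k => memLp_top_const _
  have h₁ := hx.matrix_mulVec (memLp_top_matrix_mul hB0s hKNs)
  have h₂ := hx.matrix_mulVec (memLp_top_matrix_mul hKBs hN0)
  have h₃ := integrable_integral_mul_mulVec hKBs hKN hx
  rw [kernelOp, mulVec_kernelOp _ s (hx.matrix_mulVec hKNs),
    integral_mulVec_kernelOp hKBs hKN hN0 hx, kernelOp]
  simp only [compKernel, add_mulVec]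
  rw [integral_add (f := fun ξ => (B0 s * KN s ξ) *ᵥ x ξ + (KB s ξ * N0 ξ) *ᵥ x ξ)
    (h₁.add h₂) h₃, integral_add h₁ h₂]
  abel

end Composition

end KernelOp

theorem memLp_top_restrict_of_forall_abs_le {β : Type*} [MeasurableSpace β] {μ : Measure β}
    {S : Set β} {f : β → ℝ} {M : ℝ} (hf : Measurable f) (hS : MeasurableSet S)
    (h : ∀ x ∈ S, |f x| ≤ M) : MemLp f ∞ (μ.restrict S) :=
  memLp_top_of_bound hf.aestronglyMeasurable M (ae_restrict_of_forall_mem hS h)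

section BoundedKernel

variable {m n : Type*} {K : ℝ → ℝ → Matrix m n ℝ} {a b M : ℝ}
  (hKm : ∀ i j, Measurable fun p : ℝ × ℝ => K p.1 p.2 i j)
  (hKb : ∀ s ∈ Icc a b, ∀ θ ∈ Icc a b, ∀ i j, |K s θ i j| ≤ M)
include hKm hKb

theorem memLp_top_uncurry_of_bound (i : m) (j : n) :
    MemLp (fun p : ℝ × ℝ => K p.1 p.2 i j) ∞
      ((volume.restrict (Icc a b)).prod (volume.restrict (Icc a b))) := by
  rw [Measure.prod_restrict]
  exact memLp_top_restrict_of_forall_abs_le (hKm i j) (measurableSet_Icc.prod measurableSet_Icc)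
    fun p hp => hKb _ hp.1 _ hp.2 i j

theorem memLp_top_apply_left_of_bound {s : ℝ} (hs : s ∈ Icc a b) (i : m) (j : n) :
    MemLp (fun θ => K s θ i j) ∞ (volume.restrict (Icc a b)) :=
  memLp_top_restrict_of_forall_abs_le ((hKm i j).comp measurable_prodMk_left) measurableSet_Icc
    fun θ hθ => hKb s hs θ hθ i j

theorem memLp_top_apply_right_of_bound {ξ : ℝ} (hξ : ξ ∈ Icc a b) (i : m) (j : n) :
    MemLp (fun θ => K θ ξ i j) ∞ (volume.restrict (Icc a b)) :=
  memLp_top_restrict_of_forall_abs_le ((hKm i j).comp measurable_prodMk_right) measurableSet_Icc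
    fun θ hθ => hKb θ hθ ξ hξ i j

end BoundedKernel

section IntervalSplit

variable {E : Type*} [NormedAddCommGroup E] [NormedSpace ℝ E] {f : ℝ → E} {a b c d : ℝ}

theorem integral_Icc_eq_intervalIntegral_add (hf : IntegrableOn f (Icc a b)) (hc : c ∈ Icc a b) :
    ∫ t in Icc a b, f t = (∫ t in a..c, f t) + ∫ t in c..b, f t := by
  rw [integral_Icc_eq_integral_Ioc, ← intervalIntegral.integral_of_le (hc.1.trans hc.2),
    intervalIntegral.integral_add_adjacent_intervals]
  · exact (hf.mono_set (uIcc_of_le hc.1 ▸ Icc_subset_Icc_right hc.2)).intervalIntegrable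
  · exact (hf.mono_set (uIcc_of_le hc.2 ▸ Icc_subset_Icc_left hc.1)).intervalIntegrable

theorem integral_Icc_eq_intervalIntegral_add_add (hf : IntegrableOn f (Icc a b)) (hac : a ≤ c)
    (hcd : c ≤ d) (hdb : d ≤ b) :
    ∫ t in Icc a b, f t = (∫ t in a..c, f t) + (∫ t in c..d, f t) + ∫ t in d..b, f t := by
  rw [integral_Icc_eq_intervalIntegral_add hf ⟨hac.trans hcd, hdb⟩,
    ← intervalIntegral.integral_add_adjacent_intervals]
  · exact
      (hf.mono_set (uIcc_of_le hac ▸ Icc_subset_Icc_right (hcd.trans hdb))).intervalIntegrable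
  · exact (hf.mono_set (uIcc_of_le hcd ▸ Icc_subset_Icc hac hdb)).intervalIntegrable

end IntervalSplit

section PIKernel

variable {m n : Type*}

def piKernel (C1 C2 : ℝ → ℝ → Matrix m n ℝ) : ℝ → ℝ → Matrix m n ℝ :=
  fun s θ => if θ ≤ s then C1 s θ else C2 s θ

variable {C1 C2 : ℝ → ℝ → Matrix m n ℝ}

theorem piKernel_of_le {s θ : ℝ} (h : θ ≤ s) : piKernel C1 C2 s θ = C1 s θ := if_pos h

theorem piKernel_of_lt {s θ : ℝ} (h : s < θ) : piKernel C1 C2 s θ = C2 s θ := if_neg h.not_ge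

theorem measurable_piKernel_apply (h1 : ∀ i j, Measurable fun p : ℝ × ℝ => C1 p.1 p.2 i j)
    (h2 : ∀ i j, Measurable fun p : ℝ × ℝ => C2 p.1 p.2 i j) (i : m) (j : n) :
    Measurable fun p : ℝ × ℝ => piKernel C1 C2 p.1 p.2 i j := by
  simp only [piKernel, apply_ite (fun A : Matrix m n ℝ => A i j)]
  exact Measurable.ite (measurableSet_le measurable_snd measurable_fst) (h1 i j) (h2 i j)

theorem abs_piKernel_le {S : Set ℝ} {M : ℝ} (h1 : ∀ s ∈ S, ∀ θ ∈ S, ∀ i j, |C1 s θ i j| ≤ M)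
    (h2 : ∀ s ∈ S, ∀ θ ∈ S, ∀ i j, |C2 s θ i j| ≤ M) :
    ∀ s ∈ S, ∀ θ ∈ S, ∀ i j, |piKernel C1 C2 s θ i j| ≤ M := by
  intro s hs θ hθ i j
  unfold piKernel
  split_ifs
  exacts [h1 s hs θ hθ i j, h2 s hs θ hθ i j]

end PIKernel

theorem PIop_eq_kernelOp {n : ℕ} {a b s : ℝ} {C0 : ℝ → Matrix (Fin n) (Fin n) ℝ}
    {C1 C2 : ℝ → ℝ → Matrix (Fin n) (Fin n) ℝ} {x : ℝ → Fin n → ℝ} (hs : s ∈ Icc a b)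
    (hint : IntegrableOn (fun θ => piKernel C1 C2 s θ *ᵥ x θ) (Icc a b)) :
    PIop a b C0 C1 C2 x s = kernelOp (volume.restrict (Icc a b)) C0 (piKernel C1 C2) x s := by
  rw [PIop, kernelOp, integral_Icc_eq_intervalIntegral_add hint hs, add_assoc]
  congr 2
  · exact intervalIntegral.integral_congr_Ioo_of_le hs.1 fun θ hθ => by
      rw [piKernel_of_le hθ.2.le]
  · exact intervalIntegral.integral_congr_Ioo_of_le hs.2 fun θ hθ => by
      rw [piKernel_of_lt hθ.1]

section BoundedPIop

variable {n : ℕ} {a b M : ℝ} {N0 : ℝ → Matrix (Fin n) (Fin n) ℝ}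
  {N1 N2 : ℝ → ℝ → Matrix (Fin n) (Fin n) ℝ} {x : ℝ → Fin n → ℝ}
  (hKm : ∀ i j, Measurable fun p : ℝ × ℝ => piKernel N1 N2 p.1 p.2 i j)
  (hKb : ∀ s ∈ Icc a b, ∀ θ ∈ Icc a b, ∀ i j, |piKernel N1 N2 s θ i j| ≤ M)
  (hx : Integrable x (volume.restrict (Icc a b)))
include hKm hKb hx

theorem PIop_eq_kernelOp_of_bound {r : ℝ} (hr : r ∈ Icc a b) :
    PIop a b N0 N1 N2 x r = kernelOp (volume.restrict (Icc a b)) N0 (piKernel N1 N2) x r :=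
  PIop_eq_kernelOp hr (hx.matrix_mulVec (memLp_top_apply_left_of_bound hKm hKb hr))

theorem integrable_PIop (hN0 : ∀ i j, MemLp (fun s => N0 s i j) ∞ (volume.restrict (Icc a b))) :
    Integrable (PIop a b N0 N1 N2 x) (volume.restrict (Icc a b)) :=
  (integrable_kernelOp hN0 (memLp_top_uncurry_of_bound hKm hKb) hx).congr
    (ae_restrict_of_forall_mem measurableSet_Icc fun _ hr =>
      (PIop_eq_kernelOp_of_bound hKm hKb hx hr).symm)

end BoundedPIop

section CompositeKernel

variable {l m n : Type*} [Fintype m] (a b : ℝ)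
  (B0 : ℝ → Matrix l m ℝ) (N0 : ℝ → Matrix m n ℝ)
  (B1 B2 : ℝ → ℝ → Matrix l m ℝ) (N1 N2 : ℝ → ℝ → Matrix m n ℝ)

-- The kernels `R1` and `R2` of the composite operator.
def compLowerKernel : ℝ → ℝ → Matrix l n ℝ := fun s θ => Matrix.of fun i j =>
  (B0 s * N1 s θ) i j + (B1 s θ * N0 θ) i j +
  (∫ ξ in a..θ, (B1 s ξ * N2 ξ θ) i j) +
  (∫ ξ in θ..s, (B1 s ξ * N1 ξ θ) i j) +
  ∫ ξ in s..b, (B2 s ξ * N1 ξ θ) i j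

def compUpperKernel : ℝ → ℝ → Matrix l n ℝ := fun s θ => Matrix.of fun i j =>
  (B0 s * N2 s θ) i j + (B2 s θ * N0 θ) i j +
  (∫ ξ in a..s, (B1 s ξ * N2 ξ θ) i j) +
  (∫ ξ in s..θ, (B2 s ξ * N2 ξ θ) i j) +
  ∫ ξ in θ..b, (B2 s ξ * N1 ξ θ) i j

variable {a b B0 N0 B1 B2 N1 N2} {s ξ : ℝ}
  (hint : ∀ i j,
    IntegrableOn (fun θ => (piKernel B1 B2 s θ * piKernel N1 N2 θ ξ) i j) (Icc a b))
include hint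

theorem compKernel_piKernel_of_le (haξ : a ≤ ξ) (hξs : ξ ≤ s) (hsb : s ≤ b) :
    compKernel (volume.restrict (Icc a b)) B0 (piKernel B1 B2) N0 (piKernel N1 N2) s ξ =
      compLowerKernel a b B0 N0 B1 B2 N1 N2 s ξ := by
  ext i j
  have hinner : ∫ θ in Icc a b, (piKernel B1 B2 s θ * piKernel N1 N2 θ ξ) i j =
      (∫ θ in a..ξ, (B1 s θ * N2 θ ξ) i j) + (∫ θ in ξ..s, (B1 s θ * N1 θ ξ) i j) +
        ∫ θ in s..b, (B2 s θ * N1 θ ξ) i j := by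
    rw [integral_Icc_eq_intervalIntegral_add_add (hint i j) haξ hξs hsb]
    congr 1
    · congr 1
      · exact intervalIntegral.integral_congr_Ioo_of_le haξ fun θ hθ => by
          rw [piKernel_of_le (hθ.2.le.trans hξs), piKernel_of_lt hθ.2]
      · exact intervalIntegral.integral_congr_Ioo_of_le hξs fun θ hθ => by
          rw [piKernel_of_le hθ.2.le, piKernel_of_le hθ.1.le]
    · exact intervalIntegral.integral_congr_Ioo_of_le hsb fun θ hθ => by
        rw [piKernel_of_lt hθ.1, piKernel_of_le (hξs.trans hθ.1.le)]
  simp only [compKernel, compLowerKernel, Matrix.add_apply, of_apply, piKernel_of_le hξs, hinner]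
  ring

theorem compKernel_piKernel_of_lt (has : a ≤ s) (hsξ : s < ξ) (hξb : ξ ≤ b) :
    compKernel (volume.restrict (Icc a b)) B0 (piKernel B1 B2) N0 (piKernel N1 N2) s ξ =
      compUpperKernel a b B0 N0 B1 B2 N1 N2 s ξ := by
  ext i j
  have hinner : ∫ θ in Icc a b, (piKernel B1 B2 s θ * piKernel N1 N2 θ ξ) i j =
      (∫ θ in a..s, (B1 s θ * N2 θ ξ) i j) + (∫ θ in s..ξ, (B2 s θ * N2 θ ξ) i j) +
        ∫ θ in ξ..b, (B2 s θ * N1 θ ξ) i j := by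
    rw [integral_Icc_eq_intervalIntegral_add_add (hint i j) has hsξ.le hξb]
    congr 1
    · congr 1
      · exact intervalIntegral.integral_congr_Ioo_of_le has fun θ hθ => by
          rw [piKernel_of_le hθ.2.le, piKernel_of_lt (hθ.2.trans hsξ)]
      · exact intervalIntegral.integral_congr_Ioo_of_le hsξ.le fun θ hθ => by
          rw [piKernel_of_lt hθ.1, piKernel_of_lt hθ.2]
    · exact intervalIntegral.integral_congr_Ioo_of_le hξb fun θ hθ => by
        rw [piKernel_of_lt (hsξ.trans hθ.1), piKernel_of_le hθ.1.le]
  simp only [compKernel, compUpperKernel, Matrix.add_apply, of_apply, piKernel_of_lt hsξ, hinner]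
  ring

theorem compKernel_piKernel (hs : s ∈ Icc a b) (hξ : ξ ∈ Icc a b) :
    compKernel (volume.restrict (Icc a b)) B0 (piKernel B1 B2) N0 (piKernel N1 N2) s ξ =
      piKernel (compLowerKernel a b B0 N0 B1 B2 N1 N2) (compUpperKernel a b B0 N0 B1 B2 N1 N2)
        s ξ := by
  rcases le_or_gt ξ s with hξs | hsξ
  · rw [piKernel_of_le hξs, compKernel_piKernel_of_le hint hξ.1 hξs hs.2]
  · rw [piKernel_of_lt hsξ, compKernel_piKernel_of_lt hint hs.1 hsξ hξ.2]

end CompositeKernel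

theorem PIop_comp_apply {n : ℕ} {a b : ℝ} {B0 N0 : ℝ → Matrix (Fin n) (Fin n) ℝ}
    {B1 B2 N1 N2 : ℝ → ℝ → Matrix (Fin n) (Fin n) ℝ}
    (hN0m : ∀ i j, Measurable fun s => N0 s i j)
    (hB1m : ∀ i j, Measurable fun p : ℝ × ℝ => B1 p.1 p.2 i j)
    (hB2m : ∀ i j, Measurable fun p : ℝ × ℝ => B2 p.1 p.2 i j)
    (hN1m : ∀ i j, Measurable fun p : ℝ × ℝ => N1 p.1 p.2 i j)
    (hN2m : ∀ i j, Measurable fun p : ℝ × ℝ => N2 p.1 p.2 i j) {M : ℝ}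
    (hN0b : ∀ s ∈ Icc a b, ∀ i j, |N0 s i j| ≤ M)
    (hB1b : ∀ s ∈ Icc a b, ∀ θ ∈ Icc a b, ∀ i j, |B1 s θ i j| ≤ M)
    (hB2b : ∀ s ∈ Icc a b, ∀ θ ∈ Icc a b, ∀ i j, |B2 s θ i j| ≤ M)
    (hN1b : ∀ s ∈ Icc a b, ∀ θ ∈ Icc a b, ∀ i j, |N1 s θ i j| ≤ M)
    (hN2b : ∀ s ∈ Icc a b, ∀ θ ∈ Icc a b, ∀ i j, |N2 s θ i j| ≤ M)
    {x : ℝ → Fin n → ℝ} (hx : Integrable x (volume.restrict (Icc a b)))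
    {s : ℝ} (hs : s ∈ Icc a b) :
    PIop a b B0 B1 B2 (PIop a b N0 N1 N2 x) s =
      PIop a b (fun s => B0 s * N0 s) (compLowerKernel a b B0 N0 B1 B2 N1 N2)
        (compUpperKernel a b B0 N0 B1 B2 N1 N2) x s := by
  set μ := volume.restrict (Icc a b)
  have hKBm := measurable_piKernel_apply hB1m hB2m
  have hKNm := measurable_piKernel_apply hN1m hN2m
  have hKBb := abs_piKernel_le hB1b hB2b
  have hKNb := abs_piKernel_le hN1b hN2b
  have hN0 : ∀ i j, MemLp (fun s => N0 s i j) ∞ μ := fun i j =>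
    memLp_top_restrict_of_forall_abs_le (hN0m i j) measurableSet_Icc fun s hs => hN0b s hs i j
  have hKBs := memLp_top_apply_left_of_bound hKBm hKBb hs
  have hKNs := memLp_top_apply_left_of_bound hKNm hKNb hs
  have hy : ∀ r ∈ Icc a b, _ := fun r hr => PIop_eq_kernelOp_of_bound (N0 := N0) hKNm hKNb hx hr
  have hR : ∀ᵐ ξ ∂μ, compKernel μ B0 (piKernel B1 B2) N0 (piKernel N1 N2) s ξ *ᵥ x ξ =
      piKernel (compLowerKernel a b B0 N0 B1 B2 N1 N2) (compUpperKernel a b B0 N0 B1 B2 N1 N2)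
        s ξ *ᵥ x ξ :=
    ae_restrict_of_forall_mem measurableSet_Icc fun ξ hξ => by
      rw [compKernel_piKernel (fun i j => (memLp_top_matrix_mul hKBs
        (memLp_top_apply_right_of_bound hKNm hKNb hξ) i j).integrable le_top) hs hξ]
  calc PIop a b B0 B1 B2 (PIop a b N0 N1 N2 x) s
      = kernelOp μ B0 (piKernel B1 B2) (PIop a b N0 N1 N2 x) s :=
        PIop_eq_kernelOp hs ((integrable_PIop hKNm hKNb hx hN0).matrix_mulVec hKBs)
    _ = kernelOp μ B0 (piKernel B1 B2) (kernelOp μ N0 (piKernel N1 N2) x) s :=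
        kernelOp_apply_congr (hy s hs)
          (ae_restrict_of_forall_mem measurableSet_Icc fun θ hθ => by rw [hy θ hθ])
    _ = kernelOp μ (fun r => B0 r * N0 r) (compKernel μ B0 (piKernel B1 B2) N0 (piKernel N1 N2))
          x s :=
        kernelOp_comp_apply hKBs (memLp_top_uncurry_of_bound hKNm hKNb) hN0 hKNs hx
    _ = kernelOp μ (fun r => B0 r * N0 r) (piKernel (compLowerKernel a b B0 N0 B1 B2 N1 N2)
          (compUpperKernel a b B0 N0 B1 B2 N1 N2)) x s := kernelOp_apply_congr rfl hR
    _ = _ := (PIop_eq_kernelOp hs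
          ((integrable_compKernel_mulVec hKBs (memLp_top_uncurry_of_bound hKNm hKNb) hN0 hKNs
            hx).congr hR)).symm

theorem stmt2_general (a b : ℝ) (n : ℕ)
    (B0 N0 : ℝ → Matrix (Fin n) (Fin n) ℝ)
    (B1 B2 N1 N2 : ℝ → ℝ → Matrix (Fin n) (Fin n) ℝ)
    (hN0m : ∀ i j, Measurable fun s => N0 s i j)
    (hB1m : ∀ i j, Measurable fun p : ℝ × ℝ => B1 p.1 p.2 i j)
    (hB2m : ∀ i j, Measurable fun p : ℝ × ℝ => B2 p.1 p.2 i j)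
    (hN1m : ∀ i j, Measurable fun p : ℝ × ℝ => N1 p.1 p.2 i j)
    (hN2m : ∀ i j, Measurable fun p : ℝ × ℝ => N2 p.1 p.2 i j)
    (M : ℝ)
    (hN0b : ∀ s ∈ Icc a b, ∀ i j, |N0 s i j| ≤ M)
    (hB1b : ∀ s ∈ Icc a b, ∀ θ ∈ Icc a b, ∀ i j, |B1 s θ i j| ≤ M)
    (hB2b : ∀ s ∈ Icc a b, ∀ θ ∈ Icc a b, ∀ i j, |B2 s θ i j| ≤ M)
    (hN1b : ∀ s ∈ Icc a b, ∀ θ ∈ Icc a b, ∀ i j, |N1 s θ i j| ≤ M)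
    (hN2b : ∀ s ∈ Icc a b, ∀ θ ∈ Icc a b, ∀ i j, |N2 s θ i j| ≤ M) :
    ∀ x : ℝ → Fin n → ℝ, MemLp x 2 (volume.restrict (Icc a b)) →
      ∀ᵐ s ∂(volume.restrict (Icc a b)),
        PIop a b B0 B1 B2 (PIop a b N0 N1 N2 x) s =
          PIop a b
            (fun s => B0 s * N0 s)
            (fun s θ => Matrix.of fun i j =>
              (B0 s * N1 s θ) i j + (B1 s θ * N0 θ) i j +
              (∫ ξ in a..θ, (B1 s ξ * N2 ξ θ) i j) +
              (∫ ξ in θ..s, (B1 s ξ * N1 ξ θ) i j) +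
              ∫ ξ in s..b, (B2 s ξ * N1 ξ θ) i j)
            (fun s θ => Matrix.of fun i j =>
              (B0 s * N2 s θ) i j + (B2 s θ * N0 θ) i j +
              (∫ ξ in a..s, (B1 s ξ * N2 ξ θ) i j) +
              (∫ ξ in s..θ, (B2 s ξ * N2 ξ θ) i j) +
              ∫ ξ in θ..b, (B2 s ξ * N1 ξ θ) i j)
            x s := fun _ hx =>
  ae_restrict_of_forall_mem measurableSet_Icc fun _ hs =>
    PIop_comp_apply hN0m hB1m hB2m hN1m hN2m hN0b hB1b hB2b hN1b hN2b
      (hx.integrable one_le_two) hs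

/-- composition of two 3-PI operators is the 3-PI operator with the
composition parameters {R0, R1, R2}. -/
theorem stmt2 (a b : ℝ) (hab : a < b) (n : ℕ)
    (B0 N0 : ℝ → Matrix (Fin n) (Fin n) ℝ)
    (B1 B2 N1 N2 : ℝ → ℝ → Matrix (Fin n) (Fin n) ℝ)
    (hB0m : ∀ i j, Measurable fun s => B0 s i j)
    (hN0m : ∀ i j, Measurable fun s => N0 s i j)
    (hB1m : ∀ i j, Measurable fun p : ℝ × ℝ => B1 p.1 p.2 i j)
    (hB2m : ∀ i j, Measurable fun p : ℝ × ℝ => B2 p.1 p.2 i j)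
    (hN1m : ∀ i j, Measurable fun p : ℝ × ℝ => N1 p.1 p.2 i j)
    (hN2m : ∀ i j, Measurable fun p : ℝ × ℝ => N2 p.1 p.2 i j)
    (M : ℝ)
    (hB0b : ∀ s ∈ Icc a b, ∀ i j, |B0 s i j| ≤ M)
    (hN0b : ∀ s ∈ Icc a b, ∀ i j, |N0 s i j| ≤ M)
    (hB1b : ∀ s ∈ Icc a b, ∀ θ ∈ Icc a b, ∀ i j, |B1 s θ i j| ≤ M)
    (hB2b : ∀ s ∈ Icc a b, ∀ θ ∈ Icc a b, ∀ i j, |B2 s θ i j| ≤ M)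
    (hN1b : ∀ s ∈ Icc a b, ∀ θ ∈ Icc a b, ∀ i j, |N1 s θ i j| ≤ M)
    (hN2b : ∀ s ∈ Icc a b, ∀ θ ∈ Icc a b, ∀ i j, |N2 s θ i j| ≤ M) :
    ∀ x : ℝ → Fin n → ℝ, MemLp x 2 (volume.restrict (Icc a b)) →
      ∀ᵐ s ∂(volume.restrict (Icc a b)),
        PIop a b B0 B1 B2 (PIop a b N0 N1 N2 x) s =
          PIop a b
            (fun s => B0 s * N0 s)
            (fun s θ => Matrix.of fun i j =>
              (B0 s * N1 s θ) i j + (B1 s θ * N0 θ) i j +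
              (∫ ξ in a..θ, (B1 s ξ * N2 ξ θ) i j) +
              (∫ ξ in θ..s, (B1 s ξ * N1 ξ θ) i j) +
              ∫ ξ in s..b, (B2 s ξ * N1 ξ θ) i j)
            (fun s θ => Matrix.of fun i j =>
              (B0 s * N2 s θ) i j + (B2 s θ * N0 θ) i j +
              (∫ ξ in a..s, (B1 s ξ * N2 ξ θ) i j) +
              (∫ ξ in s..θ, (B2 s ξ * N2 ξ θ) i j) +
              ∫ ξ in θ..b, (B2 s ξ * N1 ξ θ) i j)
            x s :=
  stmt2_general a b n B0 N0 B1 B2 N1 N2 hN0m hB1m hB2m hN1m hN2m M hN0b hB1b hB2b hN1b hN2b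

end
end

section
/- Let a < b, n ∈ ℕ, and let N0 : [a,b] → ℝ^{n×n}, N1, N2 : [a,b]×[a,b] → ℝ^{n×n} be bounded measurable matrix-valued functions. Define N̂0(s) = N0(s)ᵀ, N̂1(s,η) = N2(η,s)ᵀ, and N̂2(s,η) = N1(η,s)ᵀ. Then for all x, y ∈ L²([a,b];ℝⁿ), ⟨P_{N0,N1,N2} x, y⟩_{L²} = ⟨x, P_{N̂0,N̂1,N̂2} y⟩_{L²}, where ⟨u,v⟩_{L²} = ∫ₐᵇ u(s)ᵀ v(s) ds. -/
open MeasureTheory Set Matrix ENNReal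

noncomputable section

open Function

/-! Paired with `y`, the two integral parts of a 3-PI operator become integrals of the scalar
kernel `K s θ *ᵥ x θ ⬝ᵥ y s` over the two triangles of `[a,b]²`. Bounded entries and
`x, y ∈ L²` make this kernel integrable on the square, so Fubini exchanges the order of
integration, which swaps the roles of the triangles, and `u ⬝ᵥ Aᵀ *ᵥ v = A *ᵥ u ⬝ᵥ v`
transposes the kernels. -/

section MatrixIntegrability

variable {α ι κ : Type*} [MeasurableSpace α] {μ : Measure α} [Fintype ι] [Fintype κ]

lemma mulVec_dotProduct_eq_sum (A : Matrix ι κ ℝ) (u : κ → ℝ) (v : ι → ℝ) :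
    A *ᵥ u ⬝ᵥ v = ∑ i, ∑ j, A i j * (v i * u j) := by
  simp only [dotProduct, mulVec, Finset.sum_mul]
  exact Finset.sum_congr rfl fun i _ => Finset.sum_congr rfl fun j _ => by ring

variable {A : α → Matrix ι κ ℝ} {M : ℝ}

lemma integrable_mulVec (hA : ∀ i j, AEStronglyMeasurable (fun p => A p i j) μ)
    (hAb : ∀ᵐ p ∂μ, ∀ i j, |A p i j| ≤ M) {u : α → κ → ℝ} (hu : Integrable u μ) :
    Integrable (fun p => A p *ᵥ u p) μ :=
  integrable_pi_iff.2 fun i => integrable_finsetSum _ fun j _ =>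
    (hu.eval j).bdd_mul (hA i j) (hAb.mono fun _ hp => hp i j)

lemma integrable_mulVec_dotProduct (hA : ∀ i j, AEStronglyMeasurable (fun p => A p i j) μ)
    (hAb : ∀ᵐ p ∂μ, ∀ i j, |A p i j| ≤ M) {u : α → κ → ℝ} {v : α → ι → ℝ}
    (huv : ∀ i j, Integrable (fun p => v p i * u p j) μ) :
    Integrable (fun p => A p *ᵥ u p ⬝ᵥ v p) μ := by
  simp only [mulVec_dotProduct_eq_sum]
  exact integrable_finsetSum _ fun i _ => integrable_finsetSum _ fun j _ =>
    (huv i j).bdd_mul (hA i j) (hAb.mono fun _ hp => hp i j)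

lemma transpose_mulVec_dotProduct (A : Matrix ι κ ℝ) (u : ι → ℝ) (v : κ → ℝ) :
    Aᵀ *ᵥ u ⬝ᵥ v = A *ᵥ v ⬝ᵥ u := by
  rw [dotProduct_comm, dotProduct_mulVec, vecMul_transpose]

lemma intervalIntegral_dotProduct {f : ℝ → ι → ℝ} {c d : ℝ}
    (hf : IntervalIntegrable f volume c d) (w : ι → ℝ) :
    (∫ θ in c..d, f θ) ⬝ᵥ w = ∫ θ in c..d, f θ ⬝ᵥ w :=
  ((LinearMap.toContinuousLinearMap ((dotProductBilin ℝ ℝ).flip w)).intervalIntegral_comp_comm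
    hf).symm

end MatrixIntegrability

section Triangle

variable {E : Type*} [NormedAddCommGroup E] {a b : ℝ} {F : ℝ → ℝ → E}

lemma MeasureTheory.IntegrableOn.uncurry_swap {s t : Set ℝ}
    (hF : IntegrableOn (uncurry F) (s ×ˢ t)) :
    IntegrableOn (uncurry fun y x => F x y) (t ×ˢ s) := by
  rw [Measure.volume_eq_prod] at hF ⊢
  exact hF.swap

def lowerTriangleIndicator (F : ℝ → ℝ → E) : ℝ × ℝ → E :=
  {q : ℝ × ℝ | q.2 ≤ q.1}.indicator (uncurry F)

lemma integrable_lowerTriangleIndicator (hF : IntegrableOn (uncurry F) (Icc a b ×ˢ Icc a b)) :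
    Integrable (lowerTriangleIndicator F)
      ((volume.restrict (Icc a b)).prod (volume.restrict (Icc a b))) := by
  rw [Measure.prod_restrict, ← Measure.volume_eq_prod]
  exact hF.integrable.indicator (measurableSet_le measurable_snd measurable_fst)

variable [NormedSpace ℝ E]

lemma setIntegral_lowerTriangleIndicator_right {x : ℝ} (hx : x ∈ Icc a b) :
    ∫ y in Icc a b, lowerTriangleIndicator F (x, y) = ∫ y in a..x, F x y := by
  have hslice : (fun y => lowerTriangleIndicator F (x, y)) = (Iic x).indicator (F x) := by
    ext y
    simp [lowerTriangleIndicator, indicator_apply]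
  rw [hslice, integral_indicator measurableSet_Iic, Measure.restrict_restrict measurableSet_Iic,
    show Iic x ∩ Icc a b = Icc a x by ext; simp only [mem_inter_iff, mem_Iic, mem_Icc]; grind,
    intervalIntegral.integral_of_le hx.1, integral_Icc_eq_integral_Ioc]

lemma setIntegral_lowerTriangleIndicator_left {y : ℝ} (hy : y ∈ Icc a b) :
    ∫ x in Icc a b, lowerTriangleIndicator F (x, y) = ∫ x in y..b, F x y := by
  have hslice : (fun x => lowerTriangleIndicator F (x, y)) = (Ici y).indicator (F · y) := by
    ext x
    simp [lowerTriangleIndicator, indicator_apply]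
  rw [hslice, integral_indicator measurableSet_Ici, Measure.restrict_restrict measurableSet_Ici,
    show Ici y ∩ Icc a b = Icc y b by ext; simp only [mem_inter_iff, mem_Ici, mem_Icc]; grind,
    intervalIntegral.integral_of_le hy.2, integral_Icc_eq_integral_Ioc]

lemma intervalIntegrable_intervalIntegral_lowerTriangle (hab : a ≤ b)
    (hF : IntegrableOn (uncurry F) (Icc a b ×ˢ Icc a b)) :
    IntervalIntegrable (fun x => ∫ y in a..x, F x y) volume a b := by
  rw [intervalIntegrable_iff_integrableOn_Icc_of_le hab]
  refine (integrable_lowerTriangleIndicator hF).integral_prod_left.congr ?_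
  filter_upwards [ae_restrict_mem measurableSet_Icc] with x hx
  exact setIntegral_lowerTriangleIndicator_right hx

lemma intervalIntegrable_intervalIntegral_upperTriangle (hab : a ≤ b)
    (hF : IntegrableOn (uncurry F) (Icc a b ×ˢ Icc a b)) :
    IntervalIntegrable (fun y => ∫ x in y..b, F x y) volume a b := by
  rw [intervalIntegrable_iff_integrableOn_Icc_of_le hab]
  refine (integrable_lowerTriangleIndicator hF).integral_prod_right.congr ?_
  filter_upwards [ae_restrict_mem measurableSet_Icc] with y hy
  exact setIntegral_lowerTriangleIndicator_left hy

lemma intervalIntegral_triangle_swap (hab : a ≤ b)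
    (hF : IntegrableOn (uncurry F) (Icc a b ×ˢ Icc a b)) :
    ∫ x in a..b, ∫ y in a..x, F x y = ∫ y in a..b, ∫ x in y..b, F x y := by
  simp only [intervalIntegral.integral_of_le hab, ← integral_Icc_eq_integral_Ioc]
  calc ∫ x in Icc a b, ∫ y in a..x, F x y
      = ∫ x in Icc a b, ∫ y in Icc a b, lowerTriangleIndicator F (x, y) :=
        setIntegral_congr_fun measurableSet_Icc fun x hx =>
          (setIntegral_lowerTriangleIndicator_right hx).symm
    _ = ∫ y in Icc a b, ∫ x in Icc a b, lowerTriangleIndicator F (x, y) :=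
        integral_integral_swap (integrable_lowerTriangleIndicator hF)
    _ = ∫ y in Icc a b, ∫ x in y..b, F x y :=
        setIntegral_congr_fun measurableSet_Icc fun y hy =>
          setIntegral_lowerTriangleIndicator_left hy

end Triangle

section Kernel

variable {ι κ : Type*} [Fintype ι] [Fintype κ] {a b M : ℝ}

lemma intervalIntegrable_mulVec {A : ℝ → Matrix ι κ ℝ}
    (hAm : ∀ i j, Measurable fun θ => A θ i j) (hAb : ∀ θ ∈ Icc a b, ∀ i j, |A θ i j| ≤ M)
    {x : ℝ → κ → ℝ} (hx : IntegrableOn x (Icc a b)) {c d : ℝ} (hc : c ∈ Icc a b)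
    (hd : d ∈ Icc a b) :
    IntervalIntegrable (fun θ => A θ *ᵥ x θ) volume c d :=
  IntegrableOn.intervalIntegrable <| IntegrableOn.mono_set
    (integrable_mulVec (fun i j => (hAm i j).aestronglyMeasurable)
      ((ae_restrict_mem measurableSet_Icc).mono hAb) hx)
    (uIcc_subset_Icc hc hd)

lemma intervalIntegrable_mulVec_dotProduct (hab : a ≤ b) {A : ℝ → Matrix ι κ ℝ}
    (hAm : ∀ i j, Measurable fun θ => A θ i j) (hAb : ∀ θ ∈ Icc a b, ∀ i j, |A θ i j| ≤ M)
    {x : ℝ → κ → ℝ} {y : ℝ → ι → ℝ} (hx : MemLp x 2 (volume.restrict (Icc a b)))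
    (hy : MemLp y 2 (volume.restrict (Icc a b))) :
    IntervalIntegrable (fun s => A s *ᵥ x s ⬝ᵥ y s) volume a b :=
  (intervalIntegrable_iff_integrableOn_Icc_of_le hab).2 <|
    integrable_mulVec_dotProduct (fun i j => (hAm i j).aestronglyMeasurable)
      ((ae_restrict_mem measurableSet_Icc).mono hAb)
      fun i j => (hy.eval i).integrable_mul (hx.eval j)

lemma integrableOn_mulVec_dotProduct_kernel {K : ℝ → ℝ → Matrix ι κ ℝ}
    (hKm : ∀ i j, Measurable fun p : ℝ × ℝ => K p.1 p.2 i j)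
    (hKb : ∀ s ∈ Icc a b, ∀ θ ∈ Icc a b, ∀ i j, |K s θ i j| ≤ M)
    {x : ℝ → κ → ℝ} {y : ℝ → ι → ℝ} (hx : MemLp x 2 (volume.restrict (Icc a b)))
    (hy : MemLp y 2 (volume.restrict (Icc a b))) :
    IntegrableOn (uncurry fun s θ => K s θ *ᵥ x θ ⬝ᵥ y s) (Icc a b ×ˢ Icc a b) := by
  rw [IntegrableOn, Measure.volume_eq_prod, ← Measure.prod_restrict]
  refine integrable_mulVec_dotProduct (M := M) (fun i j => (hKm i j).aestronglyMeasurable) ?_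
    fun i j => ((hy.eval i).integrable one_le_two).mul_prod
      ((hx.eval j).integrable one_le_two)
  rw [Measure.prod_restrict]
  filter_upwards [ae_restrict_mem (measurableSet_Icc.prod measurableSet_Icc)] with q hq
  exact hKb _ hq.1 _ hq.2

end Kernel

section PIop

variable {n : ℕ} {a b M : ℝ} {N0 : ℝ → Matrix (Fin n) (Fin n) ℝ}
  {N1 N2 : ℝ → ℝ → Matrix (Fin n) (Fin n) ℝ} {x y : ℝ → Fin n → ℝ}

lemma PIop_dotProduct (hN1m : ∀ i j, Measurable fun p : ℝ × ℝ => N1 p.1 p.2 i j)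
    (hN1b : ∀ s ∈ Icc a b, ∀ θ ∈ Icc a b, ∀ i j, |N1 s θ i j| ≤ M)
    (hN2m : ∀ i j, Measurable fun p : ℝ × ℝ => N2 p.1 p.2 i j)
    (hN2b : ∀ s ∈ Icc a b, ∀ θ ∈ Icc a b, ∀ i j, |N2 s θ i j| ≤ M)
    (hx : IntegrableOn x (Icc a b)) {s : ℝ} (hs : s ∈ Icc a b) (w : Fin n → ℝ) :
    PIop a b N0 N1 N2 x s ⬝ᵥ w = N0 s *ᵥ x s ⬝ᵥ w + (∫ θ in a..s, N1 s θ *ᵥ x θ ⬝ᵥ w) +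
      ∫ θ in s..b, N2 s θ *ᵥ x θ ⬝ᵥ w := by
  have measurable_section : ∀ {K : ℝ → ℝ → Matrix (Fin n) (Fin n) ℝ},
      (∀ i j, Measurable fun p : ℝ × ℝ => K p.1 p.2 i j) →
        ∀ i j, Measurable fun θ => K s θ i j :=
    fun hKm i j => (hKm i j).comp (measurable_const.prodMk measurable_id)
  have hab : a ≤ b := hs.1.trans hs.2
  rw [PIop, add_dotProduct, add_dotProduct,
    intervalIntegral_dotProduct (intervalIntegrable_mulVec (measurable_section hN1m)
      (hN1b s hs) hx (left_mem_Icc.2 hab) hs),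
    intervalIntegral_dotProduct (intervalIntegrable_mulVec (measurable_section hN2m)
      (hN2b s hs) hx hs (right_mem_Icc.2 hab))]

lemma dotProduct_PIop_transpose (hN1m : ∀ i j, Measurable fun p : ℝ × ℝ => N1 p.1 p.2 i j)
    (hN1b : ∀ s ∈ Icc a b, ∀ θ ∈ Icc a b, ∀ i j, |N1 s θ i j| ≤ M)
    (hN2m : ∀ i j, Measurable fun p : ℝ × ℝ => N2 p.1 p.2 i j)
    (hN2b : ∀ s ∈ Icc a b, ∀ θ ∈ Icc a b, ∀ i j, |N2 s θ i j| ≤ M)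
    (hy : IntegrableOn y (Icc a b)) {s : ℝ} (hs : s ∈ Icc a b) (v : Fin n → ℝ) :
    v ⬝ᵥ PIop a b (fun s => (N0 s)ᵀ) (fun s η => (N2 η s)ᵀ) (fun s η => (N1 η s)ᵀ) y s =
      N0 s *ᵥ v ⬝ᵥ y s + (∫ η in a..s, N2 η s *ᵥ v ⬝ᵥ y η) +
        ∫ η in s..b, N1 η s *ᵥ v ⬝ᵥ y η := by
  rw [dotProduct_comm, PIop_dotProduct (N1 := fun s η => (N2 η s)ᵀ)
    (N2 := fun s η => (N1 η s)ᵀ) (M := M) (fun i j => (hN2m j i).comp measurable_swap)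
    (fun s hs θ hθ i j => hN2b θ hθ s hs j i) (fun i j => (hN1m j i).comp measurable_swap)
    (fun s hs θ hθ i j => hN1b θ hθ s hs j i) hy hs]
  simp only [transpose_mulVec_dotProduct]

end PIop

/-- the L²-adjoint of a 3-PI operator is the 3-PI operator with
parameters N̂0(s) = N0(s)ᵀ, N̂1(s,η) = N2(η,s)ᵀ, N̂2(s,η) = N1(η,s)ᵀ. -/
theorem stmt4 (a b : ℝ) (hab : a < b) (n : ℕ)
    (N0 : ℝ → Matrix (Fin n) (Fin n) ℝ) (N1 N2 : ℝ → ℝ → Matrix (Fin n) (Fin n) ℝ)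
    (hN0m : ∀ i j, Measurable fun s => N0 s i j)
    (hN1m : ∀ i j, Measurable fun p : ℝ × ℝ => N1 p.1 p.2 i j)
    (hN2m : ∀ i j, Measurable fun p : ℝ × ℝ => N2 p.1 p.2 i j)
    (M : ℝ)
    (hN0b : ∀ s ∈ Icc a b, ∀ i j, |N0 s i j| ≤ M)
    (hN1b : ∀ s ∈ Icc a b, ∀ θ ∈ Icc a b, ∀ i j, |N1 s θ i j| ≤ M)
    (hN2b : ∀ s ∈ Icc a b, ∀ θ ∈ Icc a b, ∀ i j, |N2 s θ i j| ≤ M)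
    (x y : ℝ → Fin n → ℝ)
    (hx : MemLp x 2 (volume.restrict (Icc a b)))
    (hy : MemLp y 2 (volume.restrict (Icc a b))) :
    ∫ s in a..b, (PIop a b N0 N1 N2 x s) ⬝ᵥ y s =
      ∫ s in a..b, x s ⬝ᵥ
        (PIop a b (fun s => (N0 s)ᵀ) (fun s η => (N2 η s)ᵀ) (fun s η => (N1 η s)ᵀ) y s) := by
  have hI : ∀ s ∈ uIcc a b, s ∈ Icc a b := fun s hs => uIcc_of_le hab.le ▸ hs
  have h0 := intervalIntegrable_mulVec_dotProduct hab.le hN0m hN0b hx hy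
  have hF1 := integrableOn_mulVec_dotProduct_kernel hN1m hN1b hx hy
  have hF2 := (integrableOn_mulVec_dotProduct_kernel hN2m hN2b hx hy).uncurry_swap
  have hlow1 := intervalIntegrable_intervalIntegral_lowerTriangle hab.le hF1
  have hupp1 := intervalIntegrable_intervalIntegral_upperTriangle hab.le hF1
  have hlow2 := intervalIntegrable_intervalIntegral_lowerTriangle hab.le hF2
  have hupp2 := intervalIntegrable_intervalIntegral_upperTriangle hab.le hF2
  rw [intervalIntegral.integral_congr fun s hs =>
      PIop_dotProduct hN1m hN1b hN2m hN2b (hx.integrable one_le_two) (hI s hs) (y s),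
    intervalIntegral.integral_congr fun s hs =>
      dotProduct_PIop_transpose hN1m hN1b hN2m hN2b (hy.integrable one_le_two) (hI s hs) (x s),
    intervalIntegral.integral_add (h0.add hlow1) hupp2, intervalIntegral.integral_add h0 hlow1,
    intervalIntegral.integral_add (h0.add hlow2) hupp1, intervalIntegral.integral_add h0 hlow2,
    intervalIntegral_triangle_swap hab.le hF1, intervalIntegral_triangle_swap hab.le hF2]
  ring

end
end

section
/- Let H be a real Hilbert space and let 𝒯, 𝒜, 𝒫 be bounded linear operators on H. Suppose 𝒫 is self-adjoint, there exists α > 0 with ⟨x, 𝒫x⟩ ≥ α‖x‖² for all x ∈ H, and there exists δ > 0 such that ⟨𝒜x, 𝒫𝒯x⟩ + ⟨𝒯x, 𝒫𝒜x⟩ ≤ −δ‖𝒯x‖² for all x ∈ H. Let ζ = ‖𝒫‖ (operator norm). Let x : [0,∞) → H be differentiable with 𝒯 x'(t) = 𝒜 x(t) for all t ≥ 0. Then for all t ≥ 0, ‖𝒯 x(t)‖² ≤ (ζ/α) ‖𝒯 x(0)‖² e^{−(δ/ζ) t}. -/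
open Set RealInnerProductSpace

/-!
The Lyapunov functional `V(t) = ⟪𝒯 x(t), 𝒫 𝒯 x(t)⟫` satisfies `α ‖𝒯 x‖² ≤ V ≤ ‖𝒫‖ ‖𝒯 x‖²`.
Since `𝒯 x' = 𝒜 x`, its derivative is the dissipation form, so
`V' ≤ -δ ‖𝒯 x‖² ≤ -(δ / ‖𝒫‖) V`; hence `V(t) e^{(δ / ‖𝒫‖) t}` is nonincreasing, and the two
bounds on `V` turn `V(t) ≤ V(0) e^{-(δ / ‖𝒫‖) t}` into the estimate.
-/

theorem le_mul_exp_of_hasDerivWithinAt_le_neg_mul {V V' : ℝ → ℝ} {K a t : ℝ}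
    (hV : ∀ s ∈ Ici a, HasDerivWithinAt V (V' s) (Ici a) s)
    (hV' : ∀ s ∈ Ici a, V' s ≤ -K * V s) (ht : a ≤ t) :
    V t ≤ V a * Real.exp (-K * (t - a)) := by
  have hderiv : ∀ s ∈ Ici a, HasDerivWithinAt (fun s => V s * Real.exp (K * s))
      ((V' s + K * V s) * Real.exp (K * s)) (Ici a) s := fun s hs =>
    ((hV s hs).mul ((hasDerivAt_id' s).const_mul K).exp.hasDerivWithinAt).congr_deriv (by ring)
  have hdecr : AntitoneOn (fun s => V s * Real.exp (K * s)) (Ici a) := by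
    refine antitoneOn_of_hasDerivWithinAt_nonpos (convex_Ici a)
      (f' := fun s => (V' s + K * V s) * Real.exp (K * s))
      (fun s hs => (hderiv s hs).continuousWithinAt) (fun s hs => ?_) (fun s hs => ?_)
    · exact (hderiv s (interior_subset hs)).mono interior_subset
    · have := hV' s (interior_subset hs)
      exact mul_nonpos_of_nonpos_of_nonneg (by linarith) (Real.exp_pos _).le
  have := hdecr self_mem_Ici ht ht
  rw [show -K * (t - a) = K * a - K * t by ring, Real.exp_sub, mul_div_assoc',
    le_div_iff₀ (Real.exp_pos _)]
  exact this

section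

variable {H : Type*} [NormedAddCommGroup H] [InnerProductSpace ℝ H]

theorem real_inner_apply_self_le_opNorm_mul_sq (P : H →L[ℝ] H) (y : H) :
    ⟪y, P y⟫ ≤ ‖P‖ * ‖y‖ ^ 2 :=
  calc ⟪y, P y⟫ ≤ ‖y‖ * ‖P y‖ := real_inner_le_norm _ _
    _ ≤ ‖y‖ * (‖P‖ * ‖y‖) := by gcongr; exact P.le_opNorm y
    _ = ‖P‖ * ‖y‖ ^ 2 := by ring

theorem div_opNorm_mul_real_inner_apply_self_le (P : H →L[ℝ] H) {δ : ℝ} (hδ : 0 ≤ δ) (y : H) :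
    δ / ‖P‖ * ⟪y, P y⟫ ≤ δ * ‖y‖ ^ 2 := by
  rcases (norm_nonneg P).eq_or_lt with hP | hP
  · rw [← hP, div_zero, zero_mul]
    positivity
  · calc δ / ‖P‖ * ⟪y, P y⟫ ≤ δ / ‖P‖ * (‖P‖ * ‖y‖ ^ 2) := by
          gcongr; exact real_inner_apply_self_le_opNorm_mul_sq P y
      _ = δ * ‖y‖ ^ 2 := by field_simp

theorem HasDerivWithinAt.real_inner_apply_self (P : H →L[ℝ] H) {y : ℝ → H} {y' : H}
    {s : Set ℝ} {t : ℝ} (hy : HasDerivWithinAt y y' s t) :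
    HasDerivWithinAt (fun t => ⟪y t, P (y t)⟫) (⟪y t, P y'⟫ + ⟪y', P (y t)⟫) s t :=
  hy.inner ℝ ((P.hasFDerivAt (x := y t)).comp_hasDerivWithinAt t hy)

end

theorem stmt13_general {H : Type*} [NormedAddCommGroup H] [InnerProductSpace ℝ H]
    (T A P : H →L[ℝ] H)
    (α : ℝ) (hα : 0 < α) (hcoer : ∀ x : H, α * ‖x‖ ^ 2 ≤ ⟪x, P x⟫)
    (δ : ℝ) (hδ : 0 < δ)
    (hdiss : ∀ x : H, ⟪A x, P (T x)⟫ + ⟪T x, P (A x)⟫ ≤ -δ * ‖T x‖ ^ 2)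
    (ζ : ℝ) (hζ : ζ = ‖P‖)
    (x x' : ℝ → H)
    (hx : ∀ t, 0 ≤ t → HasDerivWithinAt x (x' t) (Ici 0) t)
    (hPIE : ∀ t, 0 ≤ t → T (x' t) = A (x t)) :
    ∀ t, 0 ≤ t →
      ‖T (x t)‖ ^ 2 ≤ ζ / α * ‖T (x 0)‖ ^ 2 * Real.exp (-(δ / ζ) * t) := by
  intro t ht
  subst hζ
  set V : ℝ → ℝ := fun s => ⟪T (x s), P (T (x s))⟫
  have hV : ∀ s ∈ Ici (0 : ℝ), HasDerivWithinAt V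
      (⟪T (x s), P (A (x s))⟫ + ⟪A (x s), P (T (x s))⟫) (Ici 0) s := fun s hs => by
    rw [← hPIE s hs]
    exact ((T.hasFDerivAt).comp_hasDerivWithinAt s (hx s hs)).real_inner_apply_self P
  have hdecay : V t ≤ V 0 * Real.exp (-(δ / ‖P‖) * t) := by
    simpa only [sub_zero] using le_mul_exp_of_hasDerivWithinAt_le_neg_mul hV (fun s _ => by
      linarith [hdiss (x s), div_opNorm_mul_real_inner_apply_self_le P hδ.le (T (x s))]) ht
  rw [div_mul_eq_mul_div, div_mul_eq_mul_div, le_div_iff₀ hα]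
  calc ‖T (x t)‖ ^ 2 * α ≤ V t := by linarith [hcoer (T (x t))]
    _ ≤ V 0 * Real.exp (-(δ / ‖P‖) * t) := hdecay
    _ ≤ ‖P‖ * ‖T (x 0)‖ ^ 2 * Real.exp (-(δ / ‖P‖) * t) := by
      gcongr; exact real_inner_apply_self_le_opNorm_mul_sq P _

/-- Lyapunov stability for PIEs 𝒯ẋ = 𝒜x on a real Hilbert space:
if 𝒫 is self-adjoint, coercive (⟨x,𝒫x⟩ ≥ α‖x‖²) and the dissipation inequality
⟨𝒜x,𝒫𝒯x⟩ + ⟨𝒯x,𝒫𝒜x⟩ ≤ -δ‖𝒯x‖² holds, then along any differentiable solution,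
‖𝒯x(t)‖² ≤ (ζ/α)‖𝒯x(0)‖² e^{-(δ/ζ)t} where ζ = ‖𝒫‖. -/
theorem stmt13 {H : Type*} [NormedAddCommGroup H] [InnerProductSpace ℝ H]
    [CompleteSpace H]
    (T A P : H →L[ℝ] H)
    (hPsa : ∀ x y : H, ⟪P x, y⟫ = ⟪x, P y⟫)
    (α : ℝ) (hα : 0 < α) (hcoer : ∀ x : H, α * ‖x‖ ^ 2 ≤ ⟪x, P x⟫)
    (δ : ℝ) (hδ : 0 < δ)
    (hdiss : ∀ x : H, ⟪A x, P (T x)⟫ + ⟪T x, P (A x)⟫ ≤ -δ * ‖T x‖ ^ 2)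
    (ζ : ℝ) (hζ : ζ = ‖P‖)
    (x x' : ℝ → H)
    (hx : ∀ t, 0 ≤ t → HasDerivWithinAt x (x' t) (Ici 0) t)
    (hPIE : ∀ t, 0 ≤ t → T (x' t) = A (x t)) :
    ∀ t, 0 ≤ t →
      ‖T (x t)‖ ^ 2 ≤ ζ / α * ‖T (x 0)‖ ^ 2 * Real.exp (-(δ / ζ) * t) :=
  stmt13_general T A P α hα hcoer δ hδ hdiss ζ hζ x x' hx hPIE
end

section
/- Let n, m, p ∈ ℕ, let M ∈ ℝ^{n×n} be symmetric and positive definite, let A0 ∈ ℝ^{n×n}, A1 ∈ ℝ^{n×m}, A2 ∈ ℝ^{n×p}, and suppose A1 ≠ 0 or A2 ≠ 0. Then the symmetric block matrix D = [[A0ᵀM + MA0, MA1, MA2], [A1ᵀM, 0, 0], [A2ᵀM, 0, 0]] ∈ ℝ^{(n+m+p)×(n+m+p)} is not negative semidefinite. -/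
open Matrix

/-!
As `M` is symmetric, the lower-left block of `D` is the transpose of `B = [MA1 MA2]`, so on
`v = (t • x, y)` the quadratic form of `D` is `t² xᵀ(A0ᵀM + MA0)x + 2t xᵀBy`: the zero diagonal
block kills the term quadratic in `y`. A quadratic in `t` that is never positive has no linear
term, so `B = 0`, and `A1 = A2 = 0` because `M` is invertible.
-/

theorem linear_coeff_eq_zero_of_quadratic_nonpos {𝕜 : Type*} [Field 𝕜] [LinearOrder 𝕜]
    [IsStrictOrderedRing 𝕜] {a b : 𝕜} (h : ∀ t : 𝕜, a * (t * t) + b * t ≤ 0) : b = 0 := by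
  have hdiscrim := discrim_le_zero_of_nonpos (a := a) (b := b) (c := 0) (by simpa using h)
  rw [discrim, mul_zero, sub_zero] at hdiscrim
  exact (pow_eq_zero_iff two_ne_zero).mp (le_antisymm hdiscrim (sq_nonneg b))

namespace Matrix

theorem eq_zero_of_isUnit_of_mul_eq_zero {n κ α : Type*} [Fintype n] [DecidableEq n]
    [CommRing α] {M : Matrix n n α} (hM : IsUnit M) {A : Matrix n κ α} (h : M * A = 0) : A = 0 := by
  rw [← nonsing_inv_mul_cancel_left M A ((isUnit_iff_isUnit_det M).mp hM), h, Matrix.mul_zero]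

section

variable {ι κ : Type*} [Fintype ι] [Fintype κ]

theorem sumElim_dotProduct_fromBlocks_zero₂₂_mulVec {α : Type*} [CommRing α]
    (A : Matrix ι ι α) (B : Matrix ι κ α) (x : ι → α) (y : κ → α) (t : α) :
    Sum.elim (t • x) y ⬝ᵥ fromBlocks A B Bᵀ 0 *ᵥ Sum.elim (t • x) y =
      (x ⬝ᵥ A *ᵥ x) * (t * t) + 2 * (x ⬝ᵥ B *ᵥ y) * t := by
  simp only [fromBlocks_mulVec, Sum.elim_comp_inl, Sum.elim_comp_inr, sumElim_dotProduct_sumElim,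
    zero_mulVec, add_zero, dotProduct_add, mulVec_smul, smul_dotProduct, dotProduct_smul,
    smul_eq_mul]
  rw [mulVec_transpose, dotProduct_comm y, ← dotProduct_mulVec]
  ring

theorem eq_zero_of_fromBlocks_zero₂₂_dotProduct_mulVec_nonpos {𝕜 : Type*} [Field 𝕜]
    [LinearOrder 𝕜] [IsStrictOrderedRing 𝕜] {A : Matrix ι ι 𝕜} {B : Matrix ι κ 𝕜}
    (h : ∀ v, v ⬝ᵥ fromBlocks A B Bᵀ 0 *ᵥ v ≤ 0) : B = 0 := by
  have hform (x : ι → 𝕜) (y : κ → 𝕜) : x ⬝ᵥ B *ᵥ y = 0 := by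
    have hlin : 2 * (x ⬝ᵥ B *ᵥ y) = 0 := linear_coeff_eq_zero_of_quadratic_nonpos fun t => by
      simpa only [sumElim_dotProduct_fromBlocks_zero₂₂_mulVec] using h (Sum.elim (t • x) y)
    simpa using hlin
  classical
  ext i j
  simpa using hform (Pi.single i 1) (Pi.single j 1)

end

end Matrix

/-- for M symmetric positive definite and (A1, A2) ≠ (0, 0), the block
matrix D = [[A0ᵀM + MA0, MA1, MA2], [A1ᵀM, 0, 0], [A2ᵀM, 0, 0]] is not negative
semidefinite (i.e. it is not true that vᵀDv ≤ 0 for all v). -/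
theorem stmt15 (n m p : ℕ) (M A0 : Matrix (Fin n) (Fin n) ℝ) (hM : M.PosDef)
    (A1 : Matrix (Fin n) (Fin m) ℝ) (A2 : Matrix (Fin n) (Fin p) ℝ)
    (hA : A1 ≠ 0 ∨ A2 ≠ 0) :
    ¬ ∀ v : Fin n ⊕ (Fin m ⊕ Fin p) → ℝ,
        v ⬝ᵥ (Matrix.fromBlocks (A0ᵀ * M + M * A0)
            (Matrix.fromCols (M * A1) (M * A2))
            (Matrix.fromRows (A1ᵀ * M) (A2ᵀ * M)) 0).mulVec v ≤ 0 := by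
  intro h
  have hsymm : fromRows (A1ᵀ * M) (A2ᵀ * M) = (fromCols (M * A1) (M * A2))ᵀ := by
    have hMt : Mᵀ = M := hM.isHermitian
    rw [transpose_fromCols, transpose_mul, transpose_mul, hMt]
  rw [hsymm] at h
  have hzero := eq_zero_of_fromBlocks_zero₂₂_dotProduct_mulVec_nonpos h
  rw [← fromCols_zero] at hzero
  obtain ⟨h1, h2⟩ := fromCols_inj hzero
  exact hA.elim (· (eq_zero_of_isUnit_of_mul_eq_zero hM.isUnit h1))
    (· (eq_zero_of_isUnit_of_mul_eq_zero hM.isUnit h2))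
end
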